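/- Let V : ℂ^{d_A} → ℂ^{d_B} ⊗ ℂ^{d_E} be a linear isometry (V†V = I), defining the quantum channel N(ρ) = Tr_E(VρV†) and its complementary channel N̂(ρ) = Tr_B(VρV†). Let G be a Hermitian positive semidefinite d_A×d_A matrix, P ≥ 0, ε ∈ [0,1], M ≥ 2 an integer, and δ ∈ (1/M, 1/3). Let {ρ^m}_{m=1}^M be density matrices on ℂ^{d_A}, let {Λ^m}_{m=1}^M be positive semidefinite d_B×d_B matrices with ∑_{m=1}^M Λ^m = I (a POVM), and let ω be a density matrix on ℂ^{d_E}. Suppose the average conditions hold: (1/M)∑_{m=1}^M Tr(G ρ^m) ≤ P, (1/M)∑_{m=1}^M Tr(Λ^m N(ρ^m)) ≥ 1 − ε, and (1/M)∑_{m=1}^M (1/2)‖N̂(ρ^m) − ω‖₁ ≤ ε. Then there exists a subset S ⊆ {1,…,M} of cardinality ⌊δM⌋ such that for every m ∈ S: Tr(G ρ^m) ≤ P/(1−3δ), Tr(Λ^m N(ρ^m)) ≥ 1 − ε/(δ − 1/M), and (1/2)‖N̂(ρ^m) − ω‖₁ ≤ ε/(δ − 1/M). -/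

import Mathlib

open Matrix BigOperators Kronecker ComplexOrder

noncomputable section

def IsDensityMatrix {n : Type*} [Fintype n] (ρ : Matrix n n ℂ) : Prop :=
  ρ.PosSemidef ∧ ρ.trace = 1

def IsQuantumChannel {nA nB : Type*} [Fintype nA] [Fintype nB] [DecidableEq nA]
    (N : Matrix nA nA ℂ → Matrix nB nB ℂ) : Prop :=
  ∃ (k : ℕ) (K : Fin k → Matrix nB nA ℂ),
    (∀ X, N X = ∑ l, K l * X * (K l)ᴴ) ∧ (∑ l, (K l)ᴴ * K l) = 1

def ptraceSnd {n m : Type*} [Fintype m] (X : Matrix (n × m) (n × m) ℂ) : Matrix n n ℂ :=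
  Matrix.of fun a a' => ∑ b, X (a, b) (a', b)

def ptraceFst {n m : Type*} [Fintype n] (X : Matrix (n × m) (n × m) ℂ) : Matrix m m ℂ :=
  Matrix.of fun b b' => ∑ a, X (a, b) (a, b')

def vonNeumannEntropy {n : Type*} [Fintype n] [DecidableEq n] (ρ : Matrix n n ℂ) : ℝ :=
  if h : ρ.IsHermitian then ∑ i, Real.negMulLog (h.eigenvalues i) else 0

def traceNorm {m n : Type*} [Fintype m] [Fintype n] [DecidableEq n] (A : Matrix m n ℂ) : ℝ :=
  (((Matrix.posSemidef_conjTranspose_mul_self A).1.eigenvectorUnitary : Matrix n n ℂ) *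
    Matrix.diagonal ((fun x : ℝ => (x : ℂ)) ∘ (Real.sqrt ·) ∘ (Matrix.posSemidef_conjTranspose_mul_self A).1.eigenvalues) *
    (star (Matrix.posSemidef_conjTranspose_mul_self A).1.eigenvectorUnitary : Matrix n n ℂ)).trace.re

def tensorIdChannel {nA nB : Type*} (d : Type*)
    (C : Matrix nA nA ℂ → Matrix nB nB ℂ)
    (X : Matrix (d × nA) (d × nA) ℂ) : Matrix (d × nB) (d × nB) ℂ :=
  Matrix.of fun p q => C (Matrix.of fun a a' => X (p.1, a) (q.1, a')) p.2 q.2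

def maxEntangled (M : ℕ) : Matrix (Fin M × Fin M) (Fin M × Fin M) ℂ :=
  Matrix.of fun p q => if p.1 = p.2 ∧ q.1 = q.2 then (M : ℂ)⁻¹ else 0

def maxEntVec (M : ℕ) : Fin M × Fin M → ℂ :=
  fun p => if p.1 = p.2 then ((Real.sqrt M : ℝ) : ℂ)⁻¹ else 0

def fidVec {n : Type*} [Fintype n] (ψ : n → ℂ) (ρ : Matrix n n ℂ) : ℝ :=
  (star ψ ⬝ᵥ ρ.mulVec ψ).re

def thermal {n : Type*} [Fintype n] [DecidableEq n] (β : ℝ) (G : Matrix n n ℂ) : Matrix n n ℂ :=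
  ((NormedSpace.exp ((-β : ℂ) • G)).trace)⁻¹ • NormedSpace.exp ((-β : ℂ) • G)

def l2OpNorm {m n : ℕ} (A : Matrix (Fin m) (Fin n) ℂ) : ℝ :=
  ‖(Matrix.toEuclideanLin A).toContinuousLinearMap‖

end

/-! Markov's inequality applied to the average energy, decoding error and leakage shows that
at most `(1 - 3δ) M` messages exceed energy `P / (1 - 3δ)` and at most `δ M - 1` messages exceed
each error threshold `ε / (δ - 1/M)`. Hence at least `δ M + 2` messages satisfy all three uniform
bounds, and any `⌊δ M⌋` of them form the expurgated code. -/

open Matrix ComplexOrder Finset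

section PartialTrace

variable {n m : Type*} [Fintype m]

theorem ptraceSnd_eq_sum_submatrix (X : Matrix (n × m) (n × m) ℂ) :
    ptraceSnd X = ∑ b, X.submatrix (·, b) (·, b) := by
  ext a a'
  simp [ptraceSnd, Matrix.sum_apply]

theorem posSemidef_ptraceSnd {X : Matrix (n × m) (n × m) ℂ} (hX : X.PosSemidef) :
    (ptraceSnd X).PosSemidef :=
  ptraceSnd_eq_sum_submatrix X ▸ posSemidef_sum _ fun _ _ => hX.submatrix _

theorem trace_ptraceSnd [Fintype n] (X : Matrix (n × m) (n × m) ℂ) :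
    (ptraceSnd X).trace = X.trace := by
  simp [Matrix.trace, ptraceSnd, Fintype.sum_prod_type]

end PartialTrace

theorem trace_mul_mul_conjTranspose_of_isometry {R k n : Type*} [CommSemiring R] [Star R]
    [Fintype k] [Fintype n] [DecidableEq n] {V : Matrix k n R} (hV : Vᴴ * V = 1)
    (ρ : Matrix n n R) : (V * ρ * Vᴴ).trace = ρ.trace := by
  rw [trace_mul_cycle, hV, one_mul]

section PositiveTrace

variable {n : Type*} [Fintype n]

theorem re_trace_nonneg {A : Matrix n n ℂ} (hA : A.PosSemidef) : 0 ≤ A.trace.re :=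
  (Complex.nonneg_iff.mp hA.trace_nonneg).1

open scoped MatrixOrder in
theorem re_trace_mul_nonneg {A B : Matrix n n ℂ} (hA : A.PosSemidef) (hB : B.PosSemidef) :
    0 ≤ (A * B).trace.re := by
  classical
  obtain ⟨C, rfl⟩ := CStarAlgebra.nonneg_iff_eq_star_mul_self.mp hB.nonneg
  rw [star_eq_conjTranspose, ← Matrix.mul_assoc, trace_mul_cycle]
  exact re_trace_nonneg (hA.mul_mul_conjTranspose_same C)

omit [Fintype n] in
theorem posSemidef_one_sub_of_sum_eq_one [DecidableEq n] {ι : Type*} [Fintype ι]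
    {Λ : ι → Matrix n n ℂ} (hΛ : ∀ i, (Λ i).PosSemidef) (hsum : ∑ i, Λ i = 1)
    (i : ι) : (1 - Λ i).PosSemidef := by
  classical
  rw [← hsum, ← sum_erase_eq_sub (mem_univ i)]
  exact posSemidef_sum _ fun j _ => hΛ j

theorem re_trace_mul_le_one_of_sum_eq_one [DecidableEq n] {ι : Type*} [Fintype ι]
    {Λ : ι → Matrix n n ℂ} (hΛ : ∀ i, (Λ i).PosSemidef) (hsum : ∑ i, Λ i = 1)
    {σ : Matrix n n ℂ} (hσ : σ.PosSemidef) (hσtr : σ.trace = 1) (i : ι) :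
    (Λ i * σ).trace.re ≤ 1 := by
  have := re_trace_mul_nonneg (posSemidef_one_sub_of_sum_eq_one hΛ hsum i) hσ
  rw [Matrix.sub_mul, Matrix.one_mul, trace_sub, hσtr, Complex.sub_re, Complex.one_re] at this
  linarith

end PositiveTrace

theorem traceNorm_nonneg {m n : Type*} [Fintype m] [Fintype n] [DecidableEq n]
    (A : Matrix m n ℂ) : 0 ≤ traceNorm A := by
  refine re_trace_nonneg (PosSemidef.mul_mul_conjTranspose_same (posSemidef_diagonal_iff.2 ?_) _)
  intro i
  exact Complex.zero_le_real.mpr (Real.sqrt_nonneg _)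

section Counting

variable {ι : Type*}

theorem card_filter_lt_div_le (s : Finset ι) {f : ι → ℝ} {c d : ℝ} (hf : ∀ i ∈ s, 0 ≤ f i)
    (hc : 0 ≤ c) (hd : 0 < d) (hsum : ∑ i ∈ s, f i ≤ #s * c) :
    (#{i ∈ s | c / d < f i} : ℝ) ≤ #s * d := by
  rcases hc.eq_or_lt with rfl | hc
  · have hzero : ∀ i ∈ s, f i = 0 :=
      (sum_eq_zero_iff_of_nonneg hf).1 (le_antisymm (by simpa using hsum) (sum_nonneg hf))
    rw [filter_false_of_mem fun i hi => by simp [hzero i hi]]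
    simp only [card_empty, CharP.cast_eq_zero]
    positivity
  · have hmarkov : #{i ∈ s | c / d < f i} * (c / d) ≤ ∑ i ∈ s, f i :=
      calc #{i ∈ s | c / d < f i} * (c / d) ≤ ∑ i ∈ s with c / d < f i, f i := by
            simpa using card_nsmul_le_sum _ f (c / d) fun i hi => (mem_filter.1 hi).2.le
        _ ≤ ∑ i ∈ s, f i := sum_le_sum_of_subset_of_nonneg (filter_subset _ s)
            fun i hi _ => hf i hi
    rw [← mul_le_mul_iff_of_pos_right (div_pos hc hd)]
    calc _ ≤ #s * c := hmarkov.trans hsum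
      _ = #s * d * (c / d) := by field_simp

theorem card_filter_not_and_and_le (s : Finset ι) (p q r : ι → Prop) [DecidablePred p]
    [DecidablePred q] [DecidablePred r] :
    #{i ∈ s | ¬(p i ∧ q i ∧ r i)} ≤ #{i ∈ s | ¬p i} + #{i ∈ s | ¬q i} + #{i ∈ s | ¬r i} := by
  classical
  simp only [not_and_or]
  rw [filter_or, filter_or, add_assoc]
  grw [card_union_le, card_union_le]

theorem exists_subset_card_eq_forall_of_card_filter_not_add_le {s : Finset ι} {p : ι → Prop}
    [DecidablePred p] {k : ℕ} (h : #{i ∈ s | ¬p i} + k ≤ #s) :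
    ∃ S ⊆ s, #S = k ∧ ∀ i ∈ S, p i := by
  have hk : k ≤ #(s.filter p) := by
    have := card_filter_add_card_filter_not (s := s) p
    omega
  obtain ⟨S, hS, rfl⟩ := exists_subset_card_eq hk
  exact ⟨S, hS.trans (filter_subset _ s), rfl, fun i hi => (mem_filter.1 (hS hi)).2⟩

theorem exists_subset_card_eq_forall_le_div_of_sum_le (s : Finset ι) {f₁ f₂ f₃ : ι → ℝ}
    {c₁ c₂ c₃ d₁ d₂ d₃ : ℝ} {k : ℕ} (hf₁ : ∀ i ∈ s, 0 ≤ f₁ i) (hf₂ : ∀ i ∈ s, 0 ≤ f₂ i)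
    (hf₃ : ∀ i ∈ s, 0 ≤ f₃ i) (hc₁ : 0 ≤ c₁) (hc₂ : 0 ≤ c₂) (hc₃ : 0 ≤ c₃) (hd₁ : 0 < d₁)
    (hd₂ : 0 < d₂) (hd₃ : 0 < d₃) (hsum₁ : ∑ i ∈ s, f₁ i ≤ #s * c₁)
    (hsum₂ : ∑ i ∈ s, f₂ i ≤ #s * c₂) (hsum₃ : ∑ i ∈ s, f₃ i ≤ #s * c₃)
    (hk : k + #s * (d₁ + d₂ + d₃) ≤ #s) :
    ∃ S ⊆ s, #S = k ∧ ∀ i ∈ S, f₁ i ≤ c₁ / d₁ ∧ f₂ i ≤ c₂ / d₂ ∧ f₃ i ≤ c₃ / d₃ := by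
  refine exists_subset_card_eq_forall_of_card_filter_not_add_le ?_
  grw [card_filter_not_and_and_le, ← Nat.cast_le (α := ℝ)]
  push_cast
  simp only [not_le]
  linarith [card_filter_lt_div_le s hf₁ hc₁ hd₁ hsum₁, card_filter_lt_div_le s hf₂ hc₂ hd₂ hsum₂,
    card_filter_lt_div_le s hf₃ hc₃ hd₃ hsum₃]

end Counting

theorem secret_key_transmission_to_private_communication_general
    (dA dB dE M : ℕ) (hM : 2 ≤ M)
    (V : Matrix (Fin dB × Fin dE) (Fin dA) ℂ) (hV : Vᴴ * V = 1)
    (G : Matrix (Fin dA) (Fin dA) ℂ) (hG : G.PosSemidef)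
    (P : ℝ) (hP : 0 ≤ P) (ε : ℝ) (hε : ε ∈ Set.Icc (0 : ℝ) 1)
    (δ : ℝ) (hδ : δ ∈ Set.Ioo (1 / (M : ℝ)) (1 / 3))
    (ρ : Fin M → Matrix (Fin dA) (Fin dA) ℂ) (hρ : ∀ m, IsDensityMatrix (ρ m))
    (Λ : Fin M → Matrix (Fin dB) (Fin dB) ℂ)
    (hΛpos : ∀ m, (Λ m).PosSemidef) (hΛsum : ∑ m, Λ m = 1)
    (ω : Matrix (Fin dE) (Fin dE) ℂ)
    (hAvgEnergy : (M : ℝ)⁻¹ * ∑ m, (G * ρ m).trace.re ≤ P)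
    (hAvgDec : 1 - ε ≤ (M : ℝ)⁻¹ * ∑ m, (Λ m * ptraceSnd (V * ρ m * Vᴴ)).trace.re)
    (hAvgSec : (M : ℝ)⁻¹ * ∑ m, (1 / 2 : ℝ) * traceNorm (ptraceFst (V * ρ m * Vᴴ) - ω) ≤ ε) :
    ∃ S : Finset (Fin M), S.card = ⌊δ * M⌋₊ ∧
      ∀ m ∈ S,
        (G * ρ m).trace.re ≤ P / (1 - 3 * δ) ∧
        1 - ε / (δ - 1 / (M : ℝ)) ≤ (Λ m * ptraceSnd (V * ρ m * Vᴴ)).trace.re ∧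
        (1 / 2 : ℝ) * traceNorm (ptraceFst (V * ρ m * Vᴴ) - ω) ≤ ε / (δ - 1 / (M : ℝ)) := by
  obtain ⟨hδM, hδ3⟩ := hδ
  have hMpos : (0 : ℝ) < M := by exact_mod_cast (by omega : 0 < M)
  have hgap : (M : ℝ) * (δ - 1 / M) = δ * M - 1 := by field_simp
  have hfloor : (⌊δ * M⌋₊ : ℝ) ≤ δ * M :=
    Nat.floor_le (mul_nonneg ((one_div_pos.2 hMpos).trans hδM).le hMpos.le)
  set g : Fin M → ℝ := fun m => (Λ m * ptraceSnd (V * ρ m * Vᴴ)).trace.re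
  have hg : ∀ m, g m ≤ 1 := fun m =>
    re_trace_mul_le_one_of_sum_eq_one hΛpos hΛsum
      (posSemidef_ptraceSnd ((hρ m).1.mul_mul_conjTranspose_same V))
      (by rw [trace_ptraceSnd, trace_mul_mul_conjTranspose_of_isometry hV, (hρ m).2]) m
  have hDec : ∑ m, (1 - g m) ≤ M * ε := by
    have := (le_inv_mul_iff₀ hMpos).1 hAvgDec
    simp only [sum_sub_distrib, sum_const, card_univ, Fintype.card_fin, nsmul_eq_mul, mul_one]
    linarith
  obtain ⟨S, -, hS, hgood⟩ := exists_subset_card_eq_forall_le_div_of_sum_le univ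
    (fun m _ => re_trace_mul_nonneg hG (hρ m).1) (fun m _ => sub_nonneg.2 (hg m))
    (fun m _ => mul_nonneg one_half_pos.le (traceNorm_nonneg _)) hP hε.1 hε.1
    (by linarith : 0 < 1 - 3 * δ) (by linarith : 0 < δ - 1 / (M : ℝ))
    (by linarith : 0 < δ - 1 / (M : ℝ))
    (by simpa using (inv_mul_le_iff₀ hMpos).1 hAvgEnergy) (by simpa using hDec)
    (by simpa using (inv_mul_le_iff₀ hMpos).1 hAvgSec) (k := ⌊δ * M⌋₊)
    (by simp only [card_univ, Fintype.card_fin]; linarith)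
  exact ⟨S, hS, fun m hm => ⟨(hgood m hm).1, by linarith [(hgood m hm).2.1], (hgood m hm).2.2⟩⟩

/-- Code conversion from secret key transmission with an average energy
constraint to private communication with a uniform energy constraint. -/
theorem secret_key_transmission_to_private_communication
    (dA dB dE M : ℕ) (hM : 2 ≤ M)
    (V : Matrix (Fin dB × Fin dE) (Fin dA) ℂ) (hV : Vᴴ * V = 1)
    (G : Matrix (Fin dA) (Fin dA) ℂ) (hG : G.PosSemidef)
    (P : ℝ) (hP : 0 ≤ P) (ε : ℝ) (hε : ε ∈ Set.Icc (0 : ℝ) 1)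
    (δ : ℝ) (hδ : δ ∈ Set.Ioo (1 / (M : ℝ)) (1 / 3))
    (ρ : Fin M → Matrix (Fin dA) (Fin dA) ℂ) (hρ : ∀ m, IsDensityMatrix (ρ m))
    (Λ : Fin M → Matrix (Fin dB) (Fin dB) ℂ)
    (hΛpos : ∀ m, (Λ m).PosSemidef) (hΛsum : ∑ m, Λ m = 1)
    (ω : Matrix (Fin dE) (Fin dE) ℂ) (hω : IsDensityMatrix ω)
    (hAvgEnergy : (M : ℝ)⁻¹ * ∑ m, (G * ρ m).trace.re ≤ P)
    (hAvgDec : 1 - ε ≤ (M : ℝ)⁻¹ * ∑ m, (Λ m * ptraceSnd (V * ρ m * Vᴴ)).trace.re)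
    (hAvgSec : (M : ℝ)⁻¹ * ∑ m, (1 / 2 : ℝ) * traceNorm (ptraceFst (V * ρ m * Vᴴ) - ω) ≤ ε) :
    ∃ S : Finset (Fin M), S.card = ⌊δ * M⌋₊ ∧
      ∀ m ∈ S,
        (G * ρ m).trace.re ≤ P / (1 - 3 * δ) ∧
        1 - ε / (δ - 1 / (M : ℝ)) ≤ (Λ m * ptraceSnd (V * ρ m * Vᴴ)).trace.re ∧
        (1 / 2 : ℝ) * traceNorm (ptraceFst (V * ρ m * Vᴴ) - ω) ≤ ε / (δ - 1 / (M : ℝ)) :=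
  secret_key_transmission_to_private_communication_general dA dB dE M hM V hV G hG P hP ε hε δ hδ ρ
    hρ Λ hΛpos hΛsum ω hAvgEnergy hAvgDec hAvgSec
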